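/- arXiv:2105.06962 — 2 statements merged into one kernel-verified Lean document; each statement's English description precedes it below -/
import Mathlib

section
/- For every prime number ℓ and every unit a of ℤ_ℓ, the quotient ring ℤ_ℓ⟦X⟧ / (ℓ + a·X) is isomorphic, as a ring, to ℤ_ℓ. -/
/-!
Since `a` is a unit, `ℓ + a·X = a·(X - c)` with `c = -ℓ/a` in the maximal ideal of `ℤ_ℓ`. The
polynomial `X - c` is then distinguished, so Weierstrass division over the complete local ring
`ℤ_ℓ` identifies `ℤ_ℓ⟦X⟧ / (X - c)` with `ℤ_ℓ[X] / (X - c)`, which is `ℤ_ℓ` via evaluation at `c`.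
-/

open Polynomial in
theorem Polynomial.isDistinguishedAt_X_sub_C {R : Type*} [CommRing R] {I : Ideal R} {c : R}
    (hc : c ∈ I) : (X - C c).IsDistinguishedAt I where
  mem {n} hn := by
    obtain rfl : n = 0 := by have := natDegree_X_sub_C_le c; omega
    simpa using hc
  monic := monic_X_sub_C c

namespace PowerSeries

variable {A : Type*} [CommRing A]

theorem span_C_add_C_mul_X_eq_span_X_sub_C (b : A) (u : Aˣ) :
    Ideal.span {C b + C (u : A) * X} = Ideal.span {X - C (-(b * ↑u⁻¹))} := by
  rw [← Ideal.span_singleton_mul_left_unit (u.isUnit.map C) (X - _)]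
  have hu : C (u : A) * C (↑u⁻¹ : A) = 1 := by rw [← map_mul, u.mul_inv, map_one]
  congr 2
  rw [map_neg, map_mul]
  linear_combination (-C b) * hu

noncomputable def quotientSpanXSubCAlgEquiv {I : Ideal A} [IsAdicComplete I A] {c : A}
    (hc : c ∈ I) : (A⟦X⟧ ⧸ Ideal.span {X - C c}) ≃ₐ[A] A :=
  (Ideal.quotientEquivAlgOfEq A (by simp)).trans <|
    (Polynomial.isDistinguishedAt_X_sub_C hc).algEquivQuotient.symm.trans
      (Polynomial.quotientSpanXSubCAlgEquiv c)

end PowerSeries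

/-- For every prime number ℓ and every unit `a` of ℤ_ℓ, the quotient ring
ℤ_ℓ⟦X⟧ / (ℓ + a·X) is isomorphic, as a ring, to ℤ_ℓ. -/
theorem quotient_span_ell_add_aX_iso_padicInt (ℓ : ℕ) [Fact (Nat.Prime ℓ)]
    (a : ℤ_[ℓ]) (ha : IsUnit a) :
    Nonempty ((PowerSeries ℤ_[ℓ] ⧸ Ideal.span {(ℓ : PowerSeries ℤ_[ℓ]) +
      PowerSeries.C a * PowerSeries.X}) ≃+* ℤ_[ℓ]) := by
  obtain ⟨u, rfl⟩ := ha
  have hc : -(ℓ * ↑u⁻¹ : ℤ_[ℓ]) ∈ IsLocalRing.maximalIdeal ℤ_[ℓ] := by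
    rw [PadicInt.maximalIdeal_eq_span_p]
    exact neg_mem (Ideal.mul_mem_right _ _ (Ideal.subset_span rfl))
  have hspan := PowerSeries.span_C_add_C_mul_X_eq_span_X_sub_C (ℓ : ℤ_[ℓ]) u
  rw [map_natCast] at hspan
  exact ⟨((Ideal.quotientEquivAlgOfEq ℤ_[ℓ] hspan).trans
    (PowerSeries.quotientSpanXSubCAlgEquiv hc)).toRingEquiv⟩
end

section
/- For every prime number ℓ and distinct units a and b of ℤ_ℓ, the ideal of ℤ_ℓ⟦X⟧ generated by ℓ + a·X is different from the ideal generated by ℓ + b·X. -/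
/-!
A constant `c` in the ideal `(p + aX)` of `R⟦X⟧`, with `a` a unit, must vanish when `R` is
`p`-adically separated: writing `c = (p + aX) g` and comparing coefficients gives
`a gₙ = -p gₙ₊₁`, so every coefficient of `g`, and hence `c = p g₀`, is divisible by every
power of `p`. If `(p + aX) = (p + bX)`, the constant `b (p + aX) - a (p + bX) = (b - a) p` lies
in this ideal, so `(b - a) p = 0`.
-/

open PowerSeries Ideal

theorem IsHausdorff.eq_zero_of_forall_pow_dvd {R : Type*} [CommRing R] {p x : R}
    [IsHausdorff (span {p}) R] (h : ∀ n, p ^ n ∣ x) : x = 0 :=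
  IsHausdorff.haus ‹_› x fun n => by
    rw [SModEq.zero, smul_eq_mul, mul_top, span_singleton_pow, mem_span_singleton]
    exact h n

namespace PowerSeries

variable {R : Type*} [CommRing R] {p a : R}

theorem coeff_zero_C_add_C_mul_X_mul (p a : R) (g : R⟦X⟧) :
    coeff 0 ((C p + C a * X) * g) = p * coeff 0 g := by
  simp [add_mul, mul_assoc, coeff_zero_eq_constantCoeff]

theorem coeff_succ_C_add_C_mul_X_mul (p a : R) (g : R⟦X⟧) (n : ℕ) :
    coeff (n + 1) ((C p + C a * X) * g) = p * coeff (n + 1) g + a * coeff n g := by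
  rw [add_mul, mul_assoc, map_add, coeff_C_mul, coeff_C_mul, coeff_succ_X_mul]

theorem pow_dvd_coeff_of_C_eq_C_add_C_mul_X_mul (ha : IsUnit a) {c : R} {g : R⟦X⟧}
    (h : C c = (C p + C a * X) * g) (k n : ℕ) : p ^ k ∣ coeff n g := by
  induction k generalizing n with
  | zero => simp
  | succ k ih =>
    have hrec : a * coeff n g = -(p * coeff (n + 1) g) := by
      have := coeff_succ_C_add_C_mul_X_mul p a g n
      rw [← h, coeff_C, if_neg n.succ_ne_zero] at this
      linear_combination -this
    refine ha.dvd_mul_left.mp ?_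
    rw [hrec, pow_succ', dvd_neg]
    exact mul_dvd_mul_left p (ih (n + 1))

theorem eq_zero_of_C_mem_span_C_add_C_mul_X [IsHausdorff (span {p}) R] (ha : IsUnit a) {c : R}
    (h : C c ∈ span {C p + C a * X}) : c = 0 := by
  obtain ⟨g, hg⟩ := mem_span_singleton'.mp h
  rw [mul_comm] at hg
  have hc : c = p * coeff 0 g := by
    rw [← coeff_zero_C_add_C_mul_X_mul p a g, hg, coeff_zero_C]
  exact IsHausdorff.eq_zero_of_forall_pow_dvd fun n =>
    (pow_dvd_coeff_of_C_eq_C_add_C_mul_X_mul ha hg.symm n 0).trans (Dvd.intro_left p hc.symm)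

theorem span_C_add_C_mul_X_ne [IsHausdorff (span {p}) R] (hp : p ∈ nonZeroDivisors R)
    {b : R} (ha : IsUnit a) (hab : a ≠ b) :
    span {C p + C a * X} ≠ span {C p + C b * X} := by
  intro h
  have hb : C p + C b * X ∈ span {C p + C a * X} := h ▸ mem_span_singleton_self _
  have hconst : C ((b - a) * p) = C b * (C p + C a * X) - C a * (C p + C b * X) := by
    simp only [map_mul, map_sub]; ring
  have : C ((b - a) * p) ∈ span {C p + C a * X} := by
    rw [hconst]
    exact sub_mem (mul_mem_left _ _ (mem_span_singleton_self _)) (mul_mem_left _ _ hb)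
  have hzero := eq_zero_of_C_mem_span_C_add_C_mul_X ha this
  exact hab (sub_eq_zero.mp ((mul_right_mem_nonZeroDivisors_eq_zero_iff hp).mp hzero)).symm

end PowerSeries

instance PadicInt.isHausdorff_span_p (ℓ : ℕ) [Fact ℓ.Prime] :
    IsHausdorff (span {(ℓ : ℤ_[ℓ])}) ℤ_[ℓ] :=
  PadicInt.maximalIdeal_eq_span_p (p := ℓ) ▸ inferInstance

theorem span_ell_add_aX_ne_general (ℓ : ℕ) [Fact (Nat.Prime ℓ)] (a b : ℤ_[ℓ])
    (ha : IsUnit a) (hab : a ≠ b) :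
    Ideal.span {(ℓ : PowerSeries ℤ_[ℓ]) + PowerSeries.C (R := ℤ_[ℓ]) a * PowerSeries.X} ≠
      Ideal.span {(ℓ : PowerSeries ℤ_[ℓ]) + PowerSeries.C (R := ℤ_[ℓ]) b * PowerSeries.X} := by
  have hℓ : (ℓ : ℤ_[ℓ]) ∈ nonZeroDivisors ℤ_[ℓ] :=
    mem_nonZeroDivisors_of_ne_zero (Nat.cast_ne_zero.mpr (Fact.out : ℓ.Prime).ne_zero)
  rw [← map_natCast (C (R := ℤ_[ℓ]))]
  exact span_C_add_C_mul_X_ne hℓ ha hab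

/-- For every prime number ℓ and distinct units `a` and `b` of ℤ_ℓ, the ideals of
ℤ_ℓ⟦X⟧ generated by `ℓ + a·X` and by `ℓ + b·X` are different. -/
theorem span_ell_add_aX_ne (ℓ : ℕ) [Fact (Nat.Prime ℓ)] (a b : ℤ_[ℓ])
    (ha : IsUnit a) (hb : IsUnit b) (hab : a ≠ b) :
    Ideal.span {(ℓ : PowerSeries ℤ_[ℓ]) + PowerSeries.C (R := ℤ_[ℓ]) a * PowerSeries.X} ≠
      Ideal.span {(ℓ : PowerSeries ℤ_[ℓ]) + PowerSeries.C (R := ℤ_[ℓ]) b * PowerSeries.X} :=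
  span_ell_add_aX_ne_general ℓ a b ha hab
end
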